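/- Let t ≥ 1 be an integer and let G be a finite hypergraph (a finite family of finite non-empty edges on a vertex set of size n) with maximum degree d ≥ 1, such that G is t-intersecting, i.e., any t of its edges have a common vertex. Then the cover number of G satisfies τ(G) ≤ n^(1/t)·(1 + log d), where log denotes the natural logarithm. -/

import Mathlib

/-!
Counting `t`-tuples of edges by a common vertex gives `|S|^t ≤ ∑ᵥ deg_S(v)^t ≤ n · Δ(S)^t`
for every subfamily `S`, so some vertex meets at least `|S| / n^(1/t)` edges of `S`. The greedy
cover that repeatedly takes such a vertex and deletes its edges therefore has, with
`q = n^(1/t)`, at most `greedyBound q |E|` vertices: each step removes at least a `1/q`-fraction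
of the remaining `m` edges, and `greedyBound q` is concave with slope `min 1 (q/m)` at `m`.
Finally `|E| ≤ q d`, and `greedyBound q (q d) ≤ q (1 + log d)`.
-/

/-- A set of vertices `T` covers a hypergraph with edge family `E` if it meets every edge. -/
def IsCover {V : Type*} (E : Set (Set V)) (T : Set V) : Prop :=
  ∀ e ∈ E, (e ∩ T).Nonempty

/-- The cover number of a hypergraph: minimum size of a cover. -/
noncomputable def coverNumber {V : Type*} (E : Set (Set V)) : ℕ :=
  sInf {n | ∃ T : Set V, T.ncard = n ∧ IsCover E T}

/-- The `(k,ℓ)`-cover property: any at most `k` edges have a cover of size at most `ℓ`. -/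
def CoverProperty {V : Type*} (E : Set (Set V)) (k ℓ : ℕ) : Prop :=
  ∀ S ⊆ E, S.ncard ≤ k → ∃ T : Set V, T.ncard ≤ ℓ ∧ IsCover S T

/-- `E` is an `r`-partite `r`-graph w.r.t. the partition `part`. -/
def IsPartite {V : Type*} (r : ℕ) (part : V → Fin r) (E : Set (Set V)) : Prop :=
  ∀ e ∈ E, ∀ i : Fin r, (e ∩ part ⁻¹' {i}).ncard = 1

/-- A transversal cover: a cover containing exactly one vertex from each part. -/
def IsTransversalCover {V : Type*} (r : ℕ) (part : V → Fin r) (E : Set (Set V))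
    (T : Set V) : Prop :=
  IsCover E T ∧ ∀ i : Fin r, (T ∩ part ⁻¹' {i}).ncard = 1

/-- The `(r,k)`-cover property: any at most `k` edges have a transversal cover. -/
def PartiteCoverProperty {V : Type*} (r : ℕ) (part : V → Fin r) (E : Set (Set V))
    (k : ℕ) : Prop :=
  ∀ S ⊆ E, S.ncard ≤ k → ∃ T : Set V, IsTransversalCover r part S T

/-- The spanning subgraph of `G` consisting of the edges of colour `i`. -/
def colorSubgraph {V : Type*} (G : SimpleGraph V) {r : ℕ} (c : Sym2 V → Fin r)
    (i : Fin r) : SimpleGraph V where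
  Adj u v := G.Adj u v ∧ c s(u, v) = i
  symm := ⟨fun u v h => ⟨h.1.symm, by rw [Sym2.eq_swap]; exact h.2⟩⟩
  loopless := ⟨fun v h => G.loopless.irrefl v h.1⟩

section

variable {V : Type*}

noncomputable def vertexDegree (S : Set (Set V)) (v : V) : ℕ :=
  ({e ∈ S | v ∈ e} : Set (Set V)).ncard

def IsIntersecting (t : ℕ) (S : Set (Set V)) : Prop :=
  ∀ f : Fin t → Set V, (∀ i, f i ∈ S) → ∃ v : V, ∀ i, v ∈ f i

theorem coverNumber_le_ncard {E : Set (Set V)} {T : Set V} (hT : IsCover E T) :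
    coverNumber E ≤ T.ncard :=
  Nat.sInf_le ⟨T, rfl, hT⟩

namespace IsIntersecting

variable {t : ℕ} {S : Set (Set V)}

theorem mono {S' : Set (Set V)} (hS : IsIntersecting t S) (h : S' ⊆ S) :
    IsIntersecting t S' :=
  fun f hf => hS f fun i => h (hf i)

theorem ncard_pow_le_sum_vertexDegree_pow [Fintype V] (hS : IsIntersecting t S) :
    S.ncard ^ t ≤ ∑ v, vertexDegree S v ^ t := by
  classical
  set F := S.toFinite.toFinset
  have hdeg (v : V) : vertexDegree S v = (F.filter (v ∈ ·)).card := by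
    rw [vertexDegree, ← Set.ncard_coe_finset]
    congr 1
    ext e
    simp [F]
  have htuples : Fintype.piFinset (fun _ : Fin t => F) ⊆
      Finset.univ.biUnion fun v => Fintype.piFinset fun _ : Fin t => F.filter (v ∈ ·) := by
    intro f hf
    simp only [Fintype.mem_piFinset, F, Set.Finite.mem_toFinset] at hf
    obtain ⟨v, hv⟩ := hS f hf
    simp only [Finset.mem_biUnion, Finset.mem_univ, true_and, Fintype.mem_piFinset,
      Finset.mem_filter, F, Set.Finite.mem_toFinset]
    exact ⟨v, fun i => ⟨hf i, hv i⟩⟩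
  calc S.ncard ^ t = (Fintype.piFinset fun _ : Fin t => F).card := by
        rw [Fintype.card_piFinset_const, Set.ncard_eq_toFinset_card S]
    _ ≤ ∑ v, (Fintype.piFinset fun _ : Fin t => F.filter (v ∈ ·)).card :=
        (Finset.card_le_card htuples).trans Finset.card_biUnion_le
    _ = ∑ v, vertexDegree S v ^ t := by simp only [Fintype.card_piFinset_const, hdeg]

theorem ncard_le_rpow_mul [Fintype V] (ht : t ≠ 0) (hS : IsIntersecting t S) {B : ℕ}
    (hB : ∀ v, vertexDegree S v ≤ B) :
    (S.ncard : ℝ) ≤ (Fintype.card V : ℝ) ^ ((1 : ℝ) / t) * B := by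
  have hcount : S.ncard ^ t ≤ Fintype.card V * B ^ t :=
    calc S.ncard ^ t ≤ ∑ v, vertexDegree S v ^ t := hS.ncard_pow_le_sum_vertexDegree_pow
      _ ≤ ∑ _v : V, B ^ t := Finset.sum_le_sum fun v _ => Nat.pow_le_pow_left (hB v) t
      _ = Fintype.card V * B ^ t := by simp
  have hroot : ((Fintype.card V : ℝ) ^ ((1 : ℝ) / t)) ^ t = Fintype.card V := by
    rw [← Real.rpow_natCast, ← Real.rpow_mul (by positivity), one_div_mul_cancel (by positivity),
      Real.rpow_one]
  refine le_of_pow_le_pow_left₀ ht (by positivity) ?_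
  rw [mul_pow, hroot]
  exact_mod_cast hcount

theorem exists_ncard_le_rpow_mul_vertexDegree [Fintype V] (ht : t ≠ 0)
    (hS : IsIntersecting t S) (hne : S.Nonempty) :
    ∃ v, (S.ncard : ℝ) ≤ (Fintype.card V : ℝ) ^ ((1 : ℝ) / t) * vertexDegree S v := by
  obtain ⟨e, he⟩ := hne
  obtain ⟨w, -⟩ := hS (fun _ => e) fun _ => he
  have : Nonempty V := ⟨w⟩
  obtain ⟨v, hv⟩ := Finite.exists_max (vertexDegree S)
  exact ⟨v, hS.ncard_le_rpow_mul ht hv⟩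

end IsIntersecting

/-- Slope `1` up to `q`, then slope `q / m` at `m`: a greedy step on `m > q` remaining edges costs
one vertex and removes at least `m / q` of them. -/
noncomputable def greedyBound (q x : ℝ) : ℝ :=
  if x ≤ q then x else q * (1 + Real.log (x / q))

theorem greedyBound_zero {q : ℝ} (hq : 0 ≤ q) : greedyBound q 0 = 0 := by
  simp [greedyBound, hq]

theorem sub_mul_min_le_greedyBound_sub {q x y : ℝ} (hq : 0 < q) (hxy : x ≤ y) :
    (y - x) * min 1 (q / y) ≤ greedyBound q y - greedyBound q x := by
  unfold greedyBound
  split_ifs with hy hx hx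
  · nlinarith [min_le_left 1 (q / y)]
  · linarith
  all_goals
    have hy0 : 0 < y := by linarith
    have hqy : q / y ≤ 1 := (div_le_one hy0).2 (not_le.1 hy).le
    rw [min_eq_right hqy]
  · have hlog := Real.one_sub_inv_le_log_of_pos (div_pos hy0 hq)
    rw [inv_div] at hlog
    have hr : q / y * y = q := div_mul_cancel₀ q hy0.ne'
    nlinarith [mul_nonneg (sub_nonneg.2 hx) (sub_nonneg.2 hqy)]
  · have hx0 : 0 < x := by linarith
    have hlog := Real.one_sub_inv_le_log_of_pos (div_pos hy0 hx0)
    rw [inv_div, Real.log_div hy0.ne' hx0.ne'] at hlog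
    rw [Real.log_div hy0.ne' hq.ne', Real.log_div hx0.ne' hq.ne']
    have hslope : (y - x) * (q / y) = q * (1 - x / y) := by field_simp
    nlinarith [mul_le_mul_of_nonneg_left hlog hq.le]

theorem greedyBound_add_one_le {q x y : ℝ} (hq : 0 < q) (hx : 0 ≤ x) (hxy : 1 ≤ y - x)
    (hy : y ≤ q * (y - x)) :
    greedyBound q x + 1 ≤ greedyBound q y := by
  have hy0 : 0 < y := by linarith
  have hslope : 1 ≤ (y - x) * min 1 (q / y) := by
    rw [mul_min_of_nonneg _ _ (by linarith), mul_one]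
    refine le_min hxy ?_
    rw [mul_div_assoc', le_div_iff₀ hy0]
    linarith
  linarith [sub_mul_min_le_greedyBound_sub hq (by linarith : x ≤ y)]

theorem greedyBound_le_mul_one_add_log {q x : ℝ} {d : ℕ} (hq : 0 ≤ q) (hx : x ≤ q * d) :
    greedyBound q x ≤ q * (1 + Real.log d) := by
  have hlog := Real.log_natCast_nonneg d
  unfold greedyBound
  split_ifs with hxq
  · nlinarith
  · have hq0 : 0 < q := by
      rcases hq.lt_or_eq with h | rfl
      · exact h
      · simp at hx; linarith
    have hxd : x / q ≤ d := by rw [div_le_iff₀ hq0]; linarith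
    have := Real.log_le_log (div_pos (by linarith) hq0) hxd
    gcongr

theorem exists_cover_ncard_le_greedyBound {S : Set (Set V)} (hS : S.Finite) {q : ℝ}
    (hq : 0 ≤ q)
    (hdense : ∀ S' ⊆ S, S'.Nonempty → ∃ v, (S'.ncard : ℝ) ≤ q * vertexDegree S' v) :
    ∃ T : Set V, IsCover S T ∧ (T.ncard : ℝ) ≤ greedyBound q S.ncard := by
  induction hm : S.ncard using Nat.strong_induction_on generalizing S with
  | _ m ih =>
  rcases S.eq_empty_or_nonempty with rfl | hne
  · subst hm
    exact ⟨∅, fun e he => he.elim, by simp [greedyBound_zero hq]⟩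
  obtain ⟨v, hv⟩ := hdense S subset_rfl hne
  set S' := S \ {e | v ∈ e}
  have hsplit : vertexDegree S v + S'.ncard = m :=
    hm ▸ Set.ncard_inter_add_ncard_sdiff_eq_ncard S {e | v ∈ e} hS
  have hpos : 0 < m := hm ▸ (Set.ncard_pos hS).2 hne
  rw [hm] at hv
  have hprod : 0 < q * vertexDegree S v := (Nat.cast_pos.2 hpos).trans_le hv
  have hq0 : 0 < q := pos_of_mul_pos_left hprod (Nat.cast_nonneg _)
  have hdeg : 0 < vertexDegree S v := Nat.cast_pos.1 (pos_of_mul_pos_right hprod hq)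
  obtain ⟨T, hT, hTcard⟩ := ih S'.ncard (by omega) (hS.subset Set.sdiff_subset)
    (fun S'' h => hdense S'' (h.trans Set.sdiff_subset)) rfl
  refine ⟨insert v T, fun e he => ?_, ?_⟩
  · by_cases hve : v ∈ e
    · exact ⟨v, hve, Set.mem_insert v T⟩
    · obtain ⟨u, hue, huT⟩ := hT e ⟨he, hve⟩
      exact ⟨u, hue, Set.mem_insert_of_mem v huT⟩
  · have hstep : greedyBound q S'.ncard + 1 ≤ greedyBound q m := by
      have hdrop : (m : ℝ) - S'.ncard = vertexDegree S v := by
        rw [← hsplit, Nat.cast_add, add_sub_cancel_right]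
      refine greedyBound_add_one_le hq0 (Nat.cast_nonneg _) ?_ ?_ <;> rw [hdrop]
      · exact_mod_cast hdeg
      · exact hv
    calc ((insert v T).ncard : ℝ) ≤ T.ncard + 1 := by exact_mod_cast Set.ncard_insert_le v T
      _ ≤ greedyBound q m := by linarith

end

theorem stmt19_general (t : ℕ) (ht : 1 ≤ t) {V : Type*} [Fintype V]
    (E : Set (Set V))
    (d : ℕ)
    (hd : IsGreatest (Set.range fun v : V => ({e ∈ E | v ∈ e} : Set (Set V)).ncard) d)
    (hint : ∀ f : Fin t → Set V, (∀ i, f i ∈ E) → ∃ v : V, ∀ i, v ∈ f i) :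
    (coverNumber E : ℝ) ≤
      (Fintype.card V : ℝ) ^ ((1 : ℝ) / (t : ℝ)) * (1 + Real.log d) := by
  have hE : IsIntersecting t E := hint
  have ht0 : t ≠ 0 := by omega
  obtain ⟨T, hT, hTcard⟩ := exists_cover_ncard_le_greedyBound E.toFinite (by positivity)
    fun S hS hne => (hE.mono hS).exists_ncard_le_rpow_mul_vertexDegree ht0 hne
  calc (coverNumber E : ℝ) ≤ T.ncard := by exact_mod_cast coverNumber_le_ncard hT
    _ ≤ greedyBound _ E.ncard := hTcard
    _ ≤ _ := greedyBound_le_mul_one_add_log (by positivity)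
        (hE.ncard_le_rpow_mul ht0 fun v => hd.2 ⟨v, rfl⟩)

/-- a `t`-intersecting hypergraph on `n` vertices with maximum degree
`d ≥ 1` has cover number at most `n^(1/t)·(1 + log d)`. -/
theorem stmt19 (t : ℕ) (ht : 1 ≤ t) {V : Type*} [Fintype V]
    (E : Set (Set V)) (hne : ∀ e ∈ E, e.Nonempty)
    (d : ℕ) (hd1 : 1 ≤ d)
    (hd : IsGreatest (Set.range fun v : V => ({e ∈ E | v ∈ e} : Set (Set V)).ncard) d)
    (hint : ∀ f : Fin t → Set V, (∀ i, f i ∈ E) → ∃ v : V, ∀ i, v ∈ f i) :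
    (coverNumber E : ℝ) ≤
      (Fintype.card V : ℝ) ^ ((1 : ℝ) / (t : ℝ)) * (1 + Real.log d) :=
  stmt19_general t ht E d hd hint
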